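/- arXiv:1410.4708 — 3 statements merged into one kernel-verified Lean document; each statement's English description precedes it below -/
import Mathlib

section
/- Let δ₁ : ℤ⁸ → ℤ⁸ be given by the integer matrix whose rows are (0,0,0,0,0,0,0,0), (0,0,0,0,0,0,0,0), (0,−1,1,0,0,1,−1,0), (0,1,−1,0,0,−1,1,0), (1,0,0,−1,0,0,0,0), (−1,0,0,1,0,0,0,0), (0,0,0,0,−1,0,0,1), (0,0,0,0,1,0,0,−1). Then the quotient ℤ⁸ / Im(δ₁) is a free abelian group of rank 5 (i.e., isomorphic to ℤ⁵). -/
/-!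
The columns of `δ₁` span `⟨e₂ - e₃, e₄ - e₅, e₆ - e₇⟩`, so the image of `δ₁` is the kernel of
`C : x ↦ (x₀, x₁, x₂ + x₃, x₄ + x₅, x₆ + x₇)`. Exactness of `ℤ⁸ → ℤ⁸ → ℤ⁵ → 0` is
certified by integer matrices alone: a section `S` of `C` and a contracting homotopy `T` with
`δ₁ T + S C = 1`, so the quotient by the image is `ℤ⁵`.
-/

theorem LinearMap.exact_of_comp_add_comp_eq_id {R M N P : Type*} [Semiring R]
    [AddCommMonoid M] [AddCommMonoid N] [AddCommMonoid P]
    [Module R M] [Module R N] [Module R P] {f : M →ₗ[R] N} {g : N →ₗ[R] P}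
    (s : P →ₗ[R] N) (t : N →ₗ[R] M) (hgf : g ∘ₗ f = 0) (hid : f ∘ₗ t + s ∘ₗ g = id) :
    Function.Exact f g :=
  exact_of_comp_of_mem_range hgf fun x hx ↦
    ⟨t x, by simpa [hx] using LinearMap.congr_fun hid x⟩

theorem Matrix.nonempty_quotient_range_mulVecLin_equiv_of_mul_add_mul_eq_one
    {R l m n : Type*} [CommRing R] [Fintype l] [Fintype m] [Fintype n]
    [DecidableEq l] [DecidableEq m] {D : Matrix m n R} {C : Matrix l m R}
    (S : Matrix m l R) (T : Matrix n m R)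
    (hCD : C * D = 0) (hCS : C * S = 1) (hid : D * T + S * C = 1) :
    Nonempty (((m → R) ⧸ LinearMap.range D.mulVecLin) ≃ₗ[R] (l → R)) := by
  have hexact : Function.Exact D.mulVecLin C.mulVecLin :=
    LinearMap.exact_of_comp_add_comp_eq_id S.mulVecLin T.mulVecLin
      (by rw [← mulVecLin_mul, hCD, mulVecLin_zero])
      (by rw [← mulVecLin_mul, ← mulVecLin_mul, ← mulVecLin_add, hid, mulVecLin_one])
  have hsurj : Function.Surjective C.mulVecLin := fun y ↦
    ⟨S.mulVec y, by rw [mulVecLin_apply, mulVec_mulVec, hCS, one_mulVec]⟩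
  exact ⟨hexact.linearEquivOfSurjective hsurj⟩

def δ₁ : Matrix (Fin 8) (Fin 8) ℤ :=
  !![0, 0, 0, 0, 0, 0, 0, 0;
     0, 0, 0, 0, 0, 0, 0, 0;
     0, -1, 1, 0, 0, 1, -1, 0;
     0, 1, -1, 0, 0, -1, 1, 0;
     1, 0, 0, -1, 0, 0, 0, 0;
     -1, 0, 0, 1, 0, 0, 0, 0;
     0, 0, 0, 0, -1, 0, 0, 1;
     0, 0, 0, 0, 1, 0, 0, -1]

def classCoord : Matrix (Fin 5) (Fin 8) ℤ :=
  !![1, 0, 0, 0, 0, 0, 0, 0;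
     0, 1, 0, 0, 0, 0, 0, 0;
     0, 0, 1, 1, 0, 0, 0, 0;
     0, 0, 0, 0, 1, 1, 0, 0;
     0, 0, 0, 0, 0, 0, 1, 1]

def classRep : Matrix (Fin 8) (Fin 5) ℤ :=
  !![1, 0, 0, 0, 0;
     0, 1, 0, 0, 0;
     0, 0, 1, 0, 0;
     0, 0, 0, 0, 0;
     0, 0, 0, 1, 0;
     0, 0, 0, 0, 0;
     0, 0, 0, 0, 1;
     0, 0, 0, 0, 0]

def δ₁Homotopy : Matrix (Fin 8) (Fin 8) ℤ :=
  !![0, 0, 0, 0, 0, 0, 0, 0;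
     0, 0, 0, 1, 0, 0, 0, 0;
     0, 0, 0, 0, 0, 0, 0, 0;
     0, 0, 0, 0, 0, 1, 0, 0;
     0, 0, 0, 0, 0, 0, 0, 1;
     0, 0, 0, 0, 0, 0, 0, 0;
     0, 0, 0, 0, 0, 0, 0, 0;
     0, 0, 0, 0, 0, 0, 0, 0]

theorem classCoord_mul_δ₁ : classCoord * δ₁ = 0 := by decide

theorem classCoord_mul_classRep : classCoord * classRep = 1 := by decide

theorem δ₁_mul_δ₁Homotopy_add_classRep_mul_classCoord :
    δ₁ * δ₁Homotopy + classRep * classCoord = 1 := by decide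

/-- the quotient `ℤ⁸ / Im(δ₁)` is a free abelian group of rank 5,
i.e. isomorphic to `ℤ⁵`. -/
theorem stmt8 :
    Nonempty (((Fin 8 → ℤ) ⧸ LinearMap.range
      ((!![0, 0, 0, 0, 0, 0, 0, 0;
           0, 0, 0, 0, 0, 0, 0, 0;
           0, -1, 1, 0, 0, 1, -1, 0;
           0, 1, -1, 0, 0, -1, 1, 0;
           1, 0, 0, -1, 0, 0, 0, 0;
           -1, 0, 0, 1, 0, 0, 0, 0;
           0, 0, 0, 0, -1, 0, 0, 1;
           0, 0, 0, 0, 1, 0, 0, -1] : Matrix (Fin 8) (Fin 8) ℤ).mulVecLin))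
      ≃ₗ[ℤ] (Fin 5 → ℤ)) :=
  Matrix.nonempty_quotient_range_mulVecLin_equiv_of_mul_add_mul_eq_one (D := δ₁) classRep
    δ₁Homotopy classCoord_mul_δ₁ classCoord_mul_classRep
    δ₁_mul_δ₁Homotopy_add_classRep_mul_classCoord
end

section
/- Let A : ℤ⁴ → ℤ⁴ be the linear map given by the matrix [[2,1,0,0],[2,3,0,0],[0,−1,2,2],[1,0,1,3]]. Then the direct limit of the directed system ℤ⁴ → ℤ⁴ → ℤ⁴ → ⋯ with all maps equal to A is isomorphic (as an abelian group) to ℤ[1/4]² ⊕ ℤ². -/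
/-- `ℤ[1/k]`: the additive subgroup of `ℚ` of rationals whose denominator is a
power of `k`, i.e. the subgroup generated by the powers `(1/k)ⁿ`. -/
def zOneOver (k : ℕ) : AddSubgroup ℚ :=
  AddSubgroup.closure {q : ℚ | ∃ n : ℕ, q = ((k : ℚ) ^ n)⁻¹}

/-- The matrix `A₁*` acting on `ℤ⁴`. -/
def A9 : (Fin 4 → ℤ) →ₗ[ℤ] (Fin 4 → ℤ) :=
  (!![2, 1, 0, 0; 2, 3, 0, 0; 0, -1, 2, 2; 1, 0, 1, 3] :
    Matrix (Fin 4) (Fin 4) ℤ).mulVecLin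

/-- The directed system `ℤ⁴ → ℤ⁴ → ⋯` with every bonding map equal to `A₁*`. -/
def f9 : ∀ i j : ℕ, i ≤ j → (Fin 4 → ℤ) →ₗ[ℤ] (Fin 4 → ℤ) :=
  fun i j _ => (A9 ^ (j - i) : Module.End ℤ (Fin 4 → ℤ))

/-!
In the ℤ-basis `(1,2,0,1), (-1,-2,1,0), (-1,0,0,0), (0,1,0,0)` of `ℤ⁴`, whose coordinates are
`(x 3, x 2, c₁ x, c₂ x)`, the map `A` acts on each of the pairs `(x 3, c₁ x)` and `(x 2, c₂ x)` as
`M = [[4, -1], [0, 1]]`. Since `1 + 4 + ⋯ + 4ⁿ = 4 (1 + ⋯ + 4ⁿ⁻¹) + 1`, the injective maps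
`(s, m) ↦ ((s + (1 + 4 + ⋯ + 4ⁿ⁻¹) m) / 4ⁿ, m)` from the `n`-th copy of `ℤ²` to `ℤ[1/4] × ℤ` are
compatible with `M`, and they jointly cover `ℤ[1/4] × ℤ` because every element of `ℤ[1/4]` is
`a / 4ⁿ` for all large `n`. So they induce an isomorphism on the direct limit, even though `M` is
not diagonalizable over `ℤ`.
-/

open Filter LinearMap

lemma LinearMap.apply_pow_sub_apply_of_succ {R M P : Type*} [Semiring R] [AddCommMonoid M]
    [Module R M] [AddCommMonoid P] [Module R P] {A : Module.End R M} {g : ℕ → M →ₗ[R] P}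
    (h : ∀ n x, g (n + 1) (A x) = g n x) (i j : ℕ) (hij : i ≤ j) (x : M) :
    g j ((A ^ (j - i)) x) = g i x := by
  obtain ⟨k, rfl⟩ := Nat.exists_eq_add_of_le hij
  rw [Nat.add_sub_cancel_left]
  induction k with
  | zero => rfl
  | succ k ih => rw [← add_assoc, pow_succ', Module.End.mul_apply, h, ih (by omega)]

namespace zOneOver

variable {k : ℕ}

def invPow (k n : ℕ) : zOneOver k :=
  ⟨((k : ℚ) ^ n)⁻¹, AddSubgroup.subset_closure ⟨n, rfl⟩⟩

@[simp]
lemma coe_invPow (n : ℕ) : (invPow k n : ℚ) = ((k : ℚ) ^ n)⁻¹ := rfl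

lemma invPow_ne_zero (hk : k ≠ 0) (n : ℕ) : invPow k n ≠ 0 := by
  rw [ne_eq, ← Subtype.coe_inj, coe_invPow]
  simp [hk]

lemma mul_zsmul_invPow_succ (hk : k ≠ 0) (a : ℤ) (n : ℕ) :
    (k * a) • invPow k (n + 1) = a • invPow k n := by
  ext
  simp only [AddSubgroup.coe_zsmul, coe_invPow, zsmul_eq_mul, pow_succ]
  push_cast
  field_simp

lemma eventually_exists_zsmul_invPow_eq (hk : k ≠ 0) (q : zOneOver k) :
    ∀ᶠ n in atTop, ∃ a : ℤ, a • invPow k n = q := by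
  obtain ⟨q, hq⟩ := q
  simp only [Subtype.ext_iff, AddSubgroup.coe_zsmul, coe_invPow]
  induction hq using AddSubgroup.closure_induction with
  | mem x hx =>
    obtain ⟨m, rfl⟩ := hx
    filter_upwards [eventually_ge_atTop m] with n hmn
    refine ⟨(k : ℤ) ^ (n - m), ?_⟩
    have hk' : (k : ℚ) ≠ 0 := by exact_mod_cast hk
    rw [zsmul_eq_mul, Int.cast_pow, Int.cast_natCast, pow_sub₀ _ hk' hmn]
    field_simp
  | zero => exact .of_forall fun n => ⟨0, zero_smul _ _⟩
  | add x y _ _ hx hy =>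
    filter_upwards [hx, hy] with n ⟨a, ha⟩ ⟨b, hb⟩
    exact ⟨a + b, by rw [add_smul, ha, hb]⟩
  | neg x _ hx =>
    filter_upwards [hx] with n ⟨a, ha⟩
    exact ⟨-a, by rw [neg_smul, ha]⟩

end zOneOver

namespace A9

def c₁ : (Fin 4 → ℤ) →ₗ[ℤ] ℤ :=
  -proj (R := ℤ) (φ := fun _ : Fin 4 => ℤ) 0 - proj 2 + proj 3

def c₂ : (Fin 4 → ℤ) →ₗ[ℤ] ℤ :=
  proj (R := ℤ) (φ := fun _ : Fin 4 => ℤ) 1 + 2 • proj 2 - 2 • proj 3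

lemma apply_eq (x : Fin 4 → ℤ) :
    A9 x = ![2 * x 0 + x 1, 2 * x 0 + 3 * x 1, -x 1 + 2 * x 2 + 2 * x 3,
      x 0 + x 2 + 3 * x 3] := by
  ext j
  fin_cases j <;> simp [A9, Matrix.mulVec, dotProduct, Fin.sum_univ_four]

@[simp]
lemma c₁_apply (x : Fin 4 → ℤ) : c₁ x = -x 0 - x 2 + x 3 := by simp [c₁]

@[simp]
lemma c₂_apply (x : Fin 4 → ℤ) : c₂ x = x 1 + 2 * x 2 - 2 * x 3 := by simp [c₂]

lemma c₁_A9 (x : Fin 4 → ℤ) : c₁ (A9 x) = c₁ x := by simp [apply_eq]; ring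

lemma c₂_A9 (x : Fin 4 → ℤ) : c₂ (A9 x) = c₂ x := by simp [apply_eq]; ring

lemma apply_three (x : Fin 4 → ℤ) : A9 x 3 = 4 * x 3 - c₁ x := by simp [apply_eq]; ring

lemma apply_two (x : Fin 4 → ℤ) : A9 x 2 = 4 * x 2 - c₂ x := by simp [apply_eq]; ring

lemma eq_zero_of_coords_eq_zero {x : Fin 4 → ℤ} (h₃ : x 3 = 0) (h₂ : x 2 = 0) (hc₁ : c₁ x = 0)
    (hc₂ : c₂ x = 0) : x = 0 := by
  simp only [c₁_apply, c₂_apply, h₂, h₃] at hc₁ hc₂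
  ext j
  fin_cases j <;> simp <;> omega

lemma exists_coords_eq (s₁ s₂ m₁ m₂ : ℤ) :
    ∃ x : Fin 4 → ℤ, x 3 = s₁ ∧ x 2 = s₂ ∧ c₁ x = m₁ ∧ c₂ x = m₂ :=
  ⟨![s₁ - s₂ - m₁, 2 * s₁ - 2 * s₂ + m₂, s₂, s₁], rfl, rfl, by simp; ring, by simp; ring⟩

open Finset

def stage (n : ℕ) : (Fin 4 → ℤ) →ₗ[ℤ] (zOneOver 4 × zOneOver 4) × ℤ × ℤ :=
  let K := ∑ k ∈ range n, (4 : ℤ) ^ k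
  let d := toSpanSingleton ℤ _ (zOneOver.invPow 4 n)
  ((d ∘ₗ (proj 3 + K • c₁)).prod (d ∘ₗ (proj 2 + K • c₂))).prod (c₁.prod c₂)

lemma stage_apply (n : ℕ) (x : Fin 4 → ℤ) :
    stage n x = (((x 3 + (∑ k ∈ range n, 4 ^ k) * c₁ x) • zOneOver.invPow 4 n,
      (x 2 + (∑ k ∈ range n, 4 ^ k) * c₂ x) • zOneOver.invPow 4 n), c₁ x, c₂ x) := by
  rfl

lemma stage_succ_apply (n : ℕ) (x : Fin 4 → ℤ) : stage (n + 1) (A9 x) = stage n x := by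
  have key (s m : ℤ) : 4 * s - m + (∑ k ∈ range (n + 1), 4 ^ k) * m =
      4 * (s + (∑ k ∈ range n, 4 ^ k) * m) := by
    rw [geom_sum_succ]; ring
  have shift (a : ℤ) : (4 * a) • zOneOver.invPow 4 (n + 1) = a • zOneOver.invPow 4 n := by
    exact_mod_cast zOneOver.mul_zsmul_invPow_succ (by norm_num) a n
  rw [stage_apply, stage_apply, c₁_A9, c₂_A9, apply_three, apply_two, key, key, shift, shift]

lemma stage_injective (n : ℕ) : Function.Injective (stage n) := by
  refine (injective_iff_map_eq_zero _).mpr fun x hx => ?_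
  simp only [stage_apply, Prod.mk_eq_zero] at hx
  obtain ⟨⟨h₃, h₂⟩, hc₁, hc₂⟩ := hx
  simp only [hc₁, hc₂, mul_zero, add_zero, smul_eq_zero, zOneOver.invPow_ne_zero four_ne_zero,
    or_false] at h₃ h₂
  exact eq_zero_of_coords_eq_zero h₃ h₂ hc₁ hc₂

lemma exists_stage_eq (t : (zOneOver 4 × zOneOver 4) × ℤ × ℤ) : ∃ n x, stage n x = t := by
  obtain ⟨⟨q₁, q₂⟩, m₁, m₂⟩ := t
  obtain ⟨n, ⟨a₁, rfl⟩, ⟨a₂, rfl⟩⟩ :=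
    ((zOneOver.eventually_exists_zsmul_invPow_eq four_ne_zero q₁).and
      (zOneOver.eventually_exists_zsmul_invPow_eq four_ne_zero q₂)).exists
  set K := ∑ k ∈ range n, (4 : ℤ) ^ k
  obtain ⟨x, h₃, h₂, hc₁, hc₂⟩ := exists_coords_eq (a₁ - K * m₁) (a₂ - K * m₂) m₁ m₂
  exact ⟨n, x, by rw [stage_apply, h₃, h₂, hc₁, hc₂, sub_add_cancel, sub_add_cancel]⟩

end A9

/-- the direct limit of `ℤ⁴ →A ℤ⁴ →A ⋯` with
`A = [[2,1,0,0],[2,3,0,0],[0,−1,2,2],[1,0,1,3]]` is isomorphic as an abelian group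
to `ℤ[1/4]² ⊕ ℤ²`. -/
theorem stmt9 :
    Nonempty ((Module.DirectLimit (fun _ : ℕ => Fin 4 → ℤ) f9) ≃+
      ((zOneOver 4 × zOneOver 4) × ℤ × ℤ)) := by
  have compat := LinearMap.apply_pow_sub_apply_of_succ A9.stage_succ_apply
  have surj : Function.Surjective (Module.DirectLimit.lift ℤ ℕ _ f9 A9.stage compat) := by
    intro t
    obtain ⟨n, x, rfl⟩ := A9.exists_stage_eq t
    exact ⟨Module.DirectLimit.of ℤ ℕ _ f9 n x,
      Module.DirectLimit.lift_of (f := f9) A9.stage compat x⟩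
  exact ⟨(LinearEquiv.ofBijective _
    ⟨Module.DirectLimit.lift_injective _ compat A9.stage_injective, surj⟩).toAddEquiv⟩
end

section
/- Let A : ℤ⁵ → ℤ⁵ be given by the matrix [[4,1,2,2,0],[4,9,6,6,0],[4,3,6,2,0],[4,3,2,6,0],[0,0,0,0,0]]. Then the direct limit of the directed system ℤ⁵ → ℤ⁵ → ⋯ with all maps equal to A is isomorphic to ℤ[1/16] ⊕ ℤ[1/4]² ⊕ ℤ. -/
/-- The matrix `A₂*` acting on `ℤ⁵`. -/
def A10 : (Fin 5 → ℤ) →ₗ[ℤ] (Fin 5 → ℤ) :=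
  (!![4, 1, 2, 2, 0; 4, 9, 6, 6, 0; 4, 3, 6, 2, 0; 4, 3, 2, 6, 0; 0, 0, 0, 0, 0] :
    Matrix (Fin 5) (Fin 5) ℤ).mulVecLin

/-- The directed system `ℤ⁵ → ℤ⁵ → ⋯` with every bonding map equal to `A₂*`. -/
def f10 : ∀ i j : ℕ, i ≤ j → (Fin 5 → ℤ) →ₗ[ℤ] (Fin 5 → ℤ) :=
  fun i j _ => (A10 ^ (j - i) : Module.End ℤ (Fin 5 → ℤ))

/-!
The last row and column of `A₂*` vanish, so the limit only sees the block
`B = [[4,1,2,2],[4,9,6,6],[4,3,6,2],[4,3,2,6]]` of determinant `256`: the stage-`n` copy of `ℤ⁵`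
maps to `B⁻ⁿ ℤ⁴ ⊆ ℚ⁴`, and these maps identify the limit with `⋃ₙ B⁻ⁿ ℤ⁴`. A vector `v` there
is recorded by its first three coordinates, which lie in `ℤ[1/2]`, and by `w ⬝ v ∈ ℤ`, where
`w = (4,1,-2,-2)` is the left eigenvector with `w B = w`; these four numbers determine `v`.
Every such quadruple occurs because `B` maps the lattice `ker w` (the sum of the eigenspaces for
`16, 4, 4`) into `4 · ker w`, so `4⁻ⁿ ker w ⊆ B⁻ⁿ ℤ⁴`. Finally `ℤ[1/16] = ℤ[1/4] = ℤ[1/2]`.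
-/

namespace Module.DirectLimit

variable {R M N : Type*} [Ring R] [AddCommGroup M] [Module R M] [AddCommGroup N] [Module R N]
  {f : Module.End R M} {g : ℕ → M →ₗ[R] N}

theorem apply_pow_sub_eq (hg : ∀ n x, g (n + 1) (f x) = g n x) (i j : ℕ) (hij : i ≤ j) (x : M) :
    g j ((f ^ (j - i)) x) = g i x := by
  obtain ⟨d, rfl⟩ := Nat.exists_eq_add_of_le hij
  rw [Nat.add_sub_cancel_left]
  clear hij
  induction d generalizing x with
  | zero => rfl
  | succ d ih => rw [pow_succ', Module.End.mul_apply, ← add_assoc, hg, ih]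

theorem lift_pow_sub_injective (hg : ∀ n x, g (n + 1) (f x) = g n x)
    (hker : ∀ n x, g n x = 0 → ∃ k, (f ^ k) x = 0) :
    Function.Injective
      (lift R ℕ (fun _ ↦ M) (fun i j _ ↦ f ^ (j - i)) g (apply_pow_sub_eq hg)) := by
  refine (injective_iff_map_eq_zero _).mpr fun z hz ↦ ?_
  obtain ⟨n, x, rfl⟩ := exists_of z
  obtain ⟨k, hk⟩ := hker n x (by simpa using hz)
  have hnk : n ≤ n + k := Nat.le_add_right n k
  rw [← of_f (hij := hnk), Nat.add_sub_cancel_left, hk, map_zero]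

end Module.DirectLimit

namespace zOneOver

theorem intCast_div_pow_mem (k : ℕ) (p : ℤ) (n : ℕ) : (p : ℚ) / (k : ℚ) ^ n ∈ zOneOver k := by
  rw [div_eq_mul_inv, ← zsmul_eq_mul]
  exact AddSubgroup.zsmul_mem _ (AddSubgroup.subset_closure (Set.mem_ofPred.mpr ⟨n, rfl⟩)) p

def divPow (k n : ℕ) : ℤ →+ zOneOver k where
  toFun p := ⟨p / (k : ℚ) ^ n, intCast_div_pow_mem k p n⟩
  map_zero' := by ext; simp
  map_add' p q := by ext; simp [add_div]

@[simp]
theorem coe_divPow (k n : ℕ) (p : ℤ) : (divPow k n p : ℚ) = p / (k : ℚ) ^ n := rfl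

theorem divPow_add_pow_mul {k : ℕ} (hk : k ≠ 0) (n m : ℕ) (p : ℤ) :
    divPow k (n + m) (k ^ m * p) = divPow k n p := by
  ext
  simp only [coe_divPow, Int.cast_mul, Int.cast_pow, Int.cast_natCast, pow_add]
  field_simp

@[simp]
theorem divPow_eq_zero_iff {k : ℕ} (hk : k ≠ 0) {n : ℕ} {p : ℤ} : divPow k n p = 0 ↔ p = 0 := by
  simp [Subtype.ext_iff, hk]

theorem exists_divPow_eq {k : ℕ} (hk : k ≠ 0) (a : zOneOver k) : ∃ n p, divPow k n p = a := by
  obtain ⟨a, ha⟩ := a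
  simp only [Subtype.ext_iff, coe_divPow]
  induction ha using AddSubgroup.closure_induction with
  | mem q hq =>
    obtain ⟨n, rfl⟩ := hq
    exact ⟨n, 1, by simp⟩
  | zero => exact ⟨0, 0, by simp⟩
  | add q r _ _ hq hr =>
    obtain ⟨n, p, rfl⟩ := hq
    obtain ⟨m, p', rfl⟩ := hr
    refine ⟨n + m, k ^ m * p + k ^ n * p', ?_⟩
    simp only [Int.cast_add, Int.cast_mul, Int.cast_pow, Int.cast_natCast, pow_add]
    field_simp
  | neg q _ hq =>
    obtain ⟨n, p, rfl⟩ := hq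
    exact ⟨n, -p, by push_cast; ring⟩

end zOneOver

theorem zOneOver_pow {k m : ℕ} (hk : k ≠ 0) (hm : m ≠ 0) : zOneOver (k ^ m) = zOneOver k := by
  obtain ⟨m, rfl⟩ := Nat.exists_eq_succ_of_ne_zero hm
  refine le_antisymm (AddSubgroup.closure_le _ |>.mpr ?_) (AddSubgroup.closure_le _ |>.mpr ?_)
  · rintro _ ⟨n, rfl⟩
    simpa [← pow_mul] using zOneOver.intCast_div_pow_mem k 1 ((m + 1) * n)
  · rintro _ ⟨n, rfl⟩
    rw [SetLike.mem_coe]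
    convert zOneOver.intCast_div_pow_mem (k ^ (m + 1)) (k ^ (m * n)) n using 1
    push_cast
    field_simp
    ring

theorem zOneOver_sixteen : zOneOver 16 = zOneOver 4 :=
  zOneOver_pow (k := 4) (m := 2) (by norm_num) (by norm_num)

open Matrix

def B10 : Matrix (Fin 4) (Fin 4) ℤ := !![4, 1, 2, 2; 4, 9, 6, 6; 4, 3, 6, 2; 4, 3, 2, 6]

def w10 : Fin 4 → ℤ := ![4, 1, -2, -2]

theorem A10_apply (x : Fin 5 → ℤ) : A10 x = Fin.snoc (B10 *ᵥ Fin.init x) 0 := by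
  ext i
  fin_cases i <;> simp [A10, B10, mulVec, dotProduct, Fin.sum_univ_succ, Fin.init, Fin.snoc] <;> rfl

theorem det_B10 : B10.det = 256 := by
  simp [B10, det_succ_row_zero, Fin.sum_univ_succ, Fin.succAbove]

theorem w10_dotProduct (y : Fin 4 → ℤ) : w10 ⬝ᵥ y = 4 * y 0 + y 1 - 2 * y 2 - 2 * y 3 := by
  simp [w10, dotProduct, Fin.sum_univ_succ]
  ring

theorem w10_vecMul_B10 : w10 ᵥ* B10 = w10 := by decide

theorem w10_vecMul_adjugate_B10 : w10 ᵥ* B10.adjugate = (256 : ℤ) • w10 := by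
  rw [← w10_vecMul_B10, vecMul_vecMul, mul_adjugate, det_B10, vecMul_smul, vecMul_one,
    w10_vecMul_B10]

theorem w10_dotProduct_B10_mulVec (y : Fin 4 → ℤ) : w10 ⬝ᵥ (B10 *ᵥ y) = w10 ⬝ᵥ y := by
  rw [dotProduct_mulVec, w10_vecMul_B10]

theorem w10_dotProduct_adjugate_B10_pow_mulVec (n : ℕ) (y : Fin 4 → ℤ) :
    w10 ⬝ᵥ (B10.adjugate ^ n *ᵥ y) = 256 ^ n * w10 ⬝ᵥ y := by
  induction n with
  | zero => simp
  | succ n ih =>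
    rw [pow_succ', ← mulVec_mulVec, dotProduct_mulVec, w10_vecMul_adjugate_B10, smul_dotProduct,
      ih, smul_eq_mul, pow_succ']
    ring

theorem eq_zero_of_w10_dotProduct_eq_zero {y : Fin 4 → ℤ} (h0 : y 0 = 0) (h1 : y 1 = 0)
    (h2 : y 2 = 0) (hw : w10 ⬝ᵥ y = 0) : y = 0 := by
  rw [w10_dotProduct, h0, h1, h2] at hw
  have h3 : y 3 = 0 := by omega
  ext i
  fin_cases i <;> assumption

theorem exists_B10_mulVec_eq_four_smul {y : Fin 4 → ℤ} (hy : w10 ⬝ᵥ y = 0) :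
    ∃ z, B10 *ᵥ y = (4 : ℤ) • z ∧ w10 ⬝ᵥ z = 0 := by
  rw [w10_dotProduct] at hy
  -- `z = B y / 4`, computed after eliminating `y 1` with `hy`
  refine ⟨![y 2 + y 3, -8 * y 0 + 6 * y 2 + 6 * y 3, -2 * y 0 + 3 * y 2 + 2 * y 3,
    -2 * y 0 + 2 * y 2 + 3 * y 3], ?_, ?_⟩
  · ext i
    fin_cases i <;> simp [B10, mulVec, dotProduct, Fin.sum_univ_succ] <;> omega
  · simp only [w10_dotProduct, cons_val]
    ring

theorem exists_B10_pow_mulVec_eq_four_pow_smul {y : Fin 4 → ℤ} (hy : w10 ⬝ᵥ y = 0) (n : ℕ) :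
    ∃ z, B10 ^ n *ᵥ y = (4 : ℤ) ^ n • z ∧ w10 ⬝ᵥ z = 0 := by
  induction n with
  | zero => exact ⟨y, by simp, hy⟩
  | succ n ih =>
    obtain ⟨z, hz, hwz⟩ := ih
    obtain ⟨z', hz', hwz'⟩ := exists_B10_mulVec_eq_four_smul hwz
    refine ⟨z', ?_, hwz'⟩
    rw [pow_succ', ← mulVec_mulVec, hz, mulVec_smul, hz', smul_smul, pow_succ]

theorem adjugate_B10_pow_mul_pow (n : ℕ) : B10.adjugate ^ n * B10 ^ n = (256 : ℤ) ^ n • 1 := by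
  rw [← adjugate_pow, adjugate_mul, det_pow, det_B10]

theorem pow_mul_adjugate_B10_pow (n : ℕ) : B10 ^ n * B10.adjugate ^ n = (256 : ℤ) ^ n • 1 := by
  rw [← adjugate_pow, mul_adjugate, det_pow, det_B10]

abbrev Target10 := zOneOver 4 × (zOneOver 4 × zOneOver 4) × ℤ

/-- The stage-`n` map `x ↦ B⁻ⁿ x`, read in the coordinates `(v₀, v₁, v₂, w ⬝ v)`; here
`B⁻ⁿ = adj(B)ⁿ / 4 ^ (4 * n)`, and `w ⬝ B⁻ⁿ x = w ⬝ x` because `w B = w`. -/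
def stageHom10 (n : ℕ) : (Fin 5 → ℤ) →+ Target10 where
  toFun x :=
    let y := B10.adjugate ^ n *ᵥ Fin.init x
    (zOneOver.divPow 4 (4 * n) (y 0),
      (zOneOver.divPow 4 (4 * n) (y 1), zOneOver.divPow 4 (4 * n) (y 2)), w10 ⬝ᵥ Fin.init x)
  map_zero' := by
    have : Fin.init (0 : Fin 5 → ℤ) = 0 := rfl
    simp [this]
  map_add' x x' := by
    have : Fin.init (x + x') = Fin.init x + Fin.init x' := rfl
    simp [this, mulVec_add, dotProduct_add]

theorem stageHom10_succ_A10 (n : ℕ) (x : Fin 5 → ℤ) :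
    stageHom10 (n + 1) (A10 x) = stageHom10 n x := by
  have hy : B10.adjugate ^ (n + 1) *ᵥ (B10 *ᵥ Fin.init x)
      = (4 : ℤ) ^ 4 • (B10.adjugate ^ n *ᵥ Fin.init x) := by
    rw [mulVec_mulVec, pow_succ, mul_assoc, adjugate_mul, det_B10, Matrix.mul_smul, mul_one,
      smul_mulVec]
    norm_num
  have hdiv (p : ℤ) : zOneOver.divPow 4 (4 * (n + 1)) (4 ^ 4 * p) = zOneOver.divPow 4 (4 * n) p :=
    zOneOver.divPow_add_pow_mul four_ne_zero (4 * n) 4 p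
  simp only [stageHom10, AddMonoidHom.coe_mk, ZeroHom.coe_mk, A10_apply, Fin.init_snoc, hy,
    w10_dotProduct_B10_mulVec, Pi.smul_apply, smul_eq_mul, hdiv]

theorem adjugate_B10_pow_mulVec_eq {n : ℕ} {y z : Fin 4 → ℤ}
    (h : B10 ^ n *ᵥ y = (4 : ℤ) ^ n • z) :
    B10.adjugate ^ n *ᵥ z = (4 : ℤ) ^ (3 * n) • y := by
  refine smul_right_injective _ (pow_ne_zero n (four_ne_zero' ℤ)) ?_
  dsimp only
  rw [← mulVec_smul, ← h, mulVec_mulVec, adjugate_B10_pow_mul_pow, smul_mulVec, one_mulVec,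
    smul_smul, ← pow_add, show n + 3 * n = 4 * n by ring, pow_mul]
  norm_num

theorem exists_stageHom10_eq_of_w10_dotProduct_eq_zero {y : Fin 4 → ℤ} (hy : w10 ⬝ᵥ y = 0)
    (n : ℕ) : ∃ x, stageHom10 n x =
      (zOneOver.divPow 4 n (y 0), (zOneOver.divPow 4 n (y 1), zOneOver.divPow 4 n (y 2)), 0) := by
  obtain ⟨z, hz, hwz⟩ := exists_B10_pow_mulVec_eq_four_pow_smul hy n
  have hdiv (p : ℤ) : zOneOver.divPow 4 (4 * n) (4 ^ (3 * n) * p) = zOneOver.divPow 4 n p := by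
    rw [show 4 * n = n + 3 * n by ring]
    exact zOneOver.divPow_add_pow_mul four_ne_zero n (3 * n) p
  refine ⟨Fin.snoc z 0, ?_⟩
  simp only [stageHom10, AddMonoidHom.coe_mk, ZeroHom.coe_mk, Fin.init_snoc,
    adjugate_B10_pow_mulVec_eq hz, Pi.smul_apply, smul_eq_mul, hdiv, hwz]

theorem exists_stageHom10_eq (n : ℕ) (p q r : ℤ) : ∃ x, stageHom10 (n + 1) x =
    (zOneOver.divPow 4 n p, (zOneOver.divPow 4 n q, zOneOver.divPow 4 n r), 0) := by
  have hdiv (p : ℤ) : zOneOver.divPow 4 (n + 1) (4 * p) = zOneOver.divPow 4 n p := by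
    simpa using zOneOver.divPow_add_pow_mul four_ne_zero n 1 p
  -- the factor `4` makes the second entry even, so that the vector completes to one in `ker w`
  have hy : w10 ⬝ᵥ ![4 * p, 4 * q, 4 * r, 8 * p + 2 * q - 4 * r] = 0 := by
    simp only [w10_dotProduct, cons_val]
    ring
  simpa [hdiv] using exists_stageHom10_eq_of_w10_dotProduct_eq_zero hy (n + 1)

noncomputable def limitHom10 :
    Module.DirectLimit (fun _ : ℕ => Fin 5 → ℤ) f10 →ₗ[ℤ] Target10 :=
  Module.DirectLimit.lift ℤ ℕ _ f10 (fun n ↦ (stageHom10 n).toIntLinearMap)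
    (Module.DirectLimit.apply_pow_sub_eq stageHom10_succ_A10)

theorem limitHom10_of (n : ℕ) (x : Fin 5 → ℤ) :
    limitHom10 (Module.DirectLimit.of ℤ ℕ _ f10 n x) = stageHom10 n x := by
  exact Module.DirectLimit.lift_of (G := fun _ : ℕ => Fin 5 → ℤ) (f := f10) _ _ x

theorem A10_eq_zero_of_stageHom10_eq_zero {n : ℕ} {x : Fin 5 → ℤ} (h : stageHom10 n x = 0) :
    A10 x = 0 := by
  simp only [stageHom10, AddMonoidHom.coe_mk, ZeroHom.coe_mk, Prod.mk_eq_zero,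
    zOneOver.divPow_eq_zero_iff four_ne_zero] at h
  obtain ⟨h0, ⟨h1, h2⟩, hw⟩ := h
  have hy : B10.adjugate ^ n *ᵥ Fin.init x = 0 := eq_zero_of_w10_dotProduct_eq_zero h0 h1 h2
    (by rw [w10_dotProduct_adjugate_B10_pow_mulVec, hw, mul_zero])
  have hx : Fin.init x = 0 := by
    have h256 : (256 : ℤ) ^ n • Fin.init x = 0 := by
      rw [← one_mulVec (Fin.init x), ← smul_mulVec, ← pow_mul_adjugate_B10_pow, ← mulVec_mulVec,
        hy, mulVec_zero]
    exact (smul_eq_zero.mp h256).resolve_left (by positivity)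
  rw [A10_apply, hx, mulVec_zero]
  ext i
  refine Fin.lastCases ?_ (fun j ↦ ?_) i <;>
    simp only [Fin.snoc_last, Fin.snoc_castSucc, Pi.zero_apply]

theorem limitHom10_injective : Function.Injective limitHom10 :=
  Module.DirectLimit.lift_pow_sub_injective stageHom10_succ_A10
    fun _ _ h ↦ ⟨1, A10_eq_zero_of_stageHom10_eq_zero h⟩

theorem limitHom10_surjective : Function.Surjective limitHom10 := by
  have hmem (n : ℕ) (p q r : ℤ) : ((zOneOver.divPow 4 n p,
      (zOneOver.divPow 4 n q, zOneOver.divPow 4 n r), 0) : Target10) ∈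
        LinearMap.range limitHom10 := by
    obtain ⟨x, hx⟩ := exists_stageHom10_eq n p q r
    exact ⟨Module.DirectLimit.of ℤ ℕ _ f10 (n + 1) x, by rw [limitHom10_of, hx]⟩
  have hlast : ((0, (zOneOver.divPow 4 0 1, 0), 1) : Target10) ∈ LinearMap.range limitHom10 :=
    ⟨Module.DirectLimit.of ℤ ℕ _ f10 0 (Fin.snoc ![0, 1, 0, 0] 0), by
      rw [limitHom10_of]
      simp only [stageHom10, AddMonoidHom.coe_mk, ZeroHom.coe_mk, Fin.init_snoc, pow_zero,
        one_mulVec, w10_dotProduct]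
      simp⟩
  rintro ⟨a, ⟨b, c⟩, d⟩
  obtain ⟨n, p, rfl⟩ := zOneOver.exists_divPow_eq four_ne_zero a
  obtain ⟨m, q, hq⟩ := zOneOver.exists_divPow_eq four_ne_zero (b - d • zOneOver.divPow 4 0 1)
  obtain ⟨l, r, rfl⟩ := zOneOver.exists_divPow_eq four_ne_zero c
  obtain ⟨s, hs⟩ := add_mem (add_mem (add_mem (hmem n p 0 0) (hmem m 0 q 0)) (hmem l 0 0 r))
    (Submodule.smul_mem _ d hlast)
  refine ⟨s, hs.trans ?_⟩
  simp [hq]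

/-- the direct limit of `ℤ⁵ →A ℤ⁵ →A ⋯` with `A = A₂*` is isomorphic
as an abelian group to `ℤ[1/16] ⊕ ℤ[1/4]² ⊕ ℤ`. -/
theorem stmt10 :
    Nonempty ((Module.DirectLimit (fun _ : ℕ => Fin 5 → ℤ) f10) ≃+
      (zOneOver 16 × (zOneOver 4 × zOneOver 4) × ℤ)) :=
  ⟨(LinearEquiv.ofBijective limitHom10
      ⟨limitHom10_injective, limitHom10_surjective⟩).toAddEquiv.trans
    ((AddEquiv.addSubgroupCongr zOneOver_sixteen).symm.prodCongr (AddEquiv.refl _))⟩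
end
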